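/- arXiv:2107.00228 — 4 statements merged into one kernel-verified Lean document; each statement's English description precedes it below -/
import Mathlib

section
/- Let σ > 0, let x, δ ∈ ℝ^m with δ ≠ 0, and let a ∈ ℝ. Consider the half-space H = {z ∈ ℝ^m : ⟨δ, z − x⟩ ≤ σ‖δ‖₂ · a}. Then the isotropic Gaussian measure N(x, σ²I) assigns H measure Φ(a), and the shifted isotropic Gaussian measure N(x + δ, σ²I) assigns H measure Φ(a − ‖δ‖₂/σ). -/
open MeasureTheory ProbabilityTheory
open scoped RealInnerProductSpace

/-- The standard Gaussian CDF `Φ`. -/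
noncomputable def Phi (a : ℝ) : ℝ := ((gaussianReal 0 1) (Set.Iic a)).toReal

/-- The isotropic Gaussian measure `N(x, σ²I)` on `ℝ^m`, as the product of
one-dimensional Gaussians with means `x i` and variance `σ²`. -/
noncomputable def gaussPi (m : ℕ) (σ : ℝ) (x : EuclideanSpace ℝ (Fin m)) :
    Measure (EuclideanSpace ℝ (Fin m)) :=
  (Measure.pi fun i => gaussianReal (x i) ⟨σ ^ 2, sq_nonneg σ⟩).map
    (MeasurableEquiv.toLp 2 (Fin m → ℝ))

/-! The law `N(x, σ²I)` is the image of the standard Gaussian `stdGaussian` under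
`w ↦ x + σ • w`, and the standard Gaussian pushes forward along `⟪δ, ·⟫` to `N(0, ‖δ‖²)`
(its variance along a linear form is the squared norm of the form). Hence `z ↦ ⟪δ, z - y⟫`
has law `N(⟪δ, x - y⟫, σ²‖δ‖²)` under `N(x, σ²I)`, and the measure of the half-space is this
real Gaussian's CDF at the threshold; the shift by `δ` moves the mean to `‖δ‖²`. -/

lemma gaussianReal_map_const_add_mul (c s μ : ℝ) (v : NNReal) :
    (gaussianReal μ v).map (fun t => c + s * t) =
      gaussianReal (c + s * μ) (.mk (s ^ 2) (sq_nonneg s) * v) := by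
  have h : (fun t => c + s * t) = (c + ·) ∘ (s * ·) := rfl
  rw [h, ← Measure.map_map (by fun_prop) (by fun_prop), gaussianReal_map_const_mul,
    gaussianReal_map_const_add, add_comm]

lemma gaussianReal_Iic_eq_ofReal_Phi (μ : ℝ) {s : ℝ} (hs : 0 < s) (c : ℝ) :
    gaussianReal μ (.mk (s ^ 2) (sq_nonneg s)) (Set.Iic c) =
      ENNReal.ofReal (Phi ((c - μ) / s)) := by
  have hmap : gaussianReal μ (.mk (s ^ 2) (sq_nonneg s)) =
      (gaussianReal 0 1).map (fun t => μ + s * t) := by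
    rw [gaussianReal_map_const_add_mul, mul_zero, add_zero, mul_one]
  have hpre : (fun t => μ + s * t) ⁻¹' Set.Iic c = Set.Iic ((c - μ) / s) := by
    ext t
    simp [le_div_iff₀ hs, mul_comm, le_sub_iff_add_le']
  rw [hmap, Measure.map_apply (by fun_prop) measurableSet_Iic, hpre, Phi,
    ENNReal.ofReal_toReal (measure_ne_top _ _)]

lemma gaussPi_eq_map_stdGaussian (m : ℕ) (σ : ℝ) (x : EuclideanSpace ℝ (Fin m)) :
    gaussPi m σ x = (stdGaussian (EuclideanSpace ℝ (Fin m))).map (fun w => x + σ • w) := by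
  have hcoord : ∀ i, gaussianReal (x i) ⟨σ ^ 2, sq_nonneg σ⟩ =
      (gaussianReal 0 1).map (fun t => x i + σ * t) := fun i => by
    rw [gaussianReal_map_const_add_mul, mul_zero, add_zero, mul_one]
    -- `gaussPi` builds the variance with `⟨_, _⟩` rather than `NNReal.mk`
    rfl
  rw [gaussPi, funext hcoord, ← Measure.pi_map_pi (fun _ => by fun_prop),
    ← map_pi_eq_stdGaussian, Measure.map_map (by fun_prop) (by fun_prop),
    Measure.map_map (by fun_prop) (by fun_prop)]
  rfl

lemma stdGaussian_map_inner {E : Type*} [NormedAddCommGroup E] [InnerProductSpace ℝ E]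
    [FiniteDimensional ℝ E] [MeasurableSpace E] [BorelSpace E] (δ : E) :
    (stdGaussian E).map (fun w => ⟪δ, w⟫) = gaussianReal 0 (.mk (‖δ‖ ^ 2) (sq_nonneg _)) := by
  have h := IsGaussian.map_eq_gaussianReal (μ := stdGaussian E) (innerSL ℝ δ)
  rw [integral_strongDual_stdGaussian, variance_dual_stdGaussian, innerSL_apply_norm] at h
  convert h using 2
  · ext; simp
  · ext; exact (Real.coe_toNNReal _ (sq_nonneg _)).symm

lemma gaussPi_map_inner_sub (m : ℕ) (σ : ℝ) (x y δ : EuclideanSpace ℝ (Fin m)) :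
    (gaussPi m σ x).map (fun z => ⟪δ, z - y⟫) =
      gaussianReal ⟪δ, x - y⟫ (.mk ((σ * ‖δ‖) ^ 2) (sq_nonneg _)) := by
  have h : (fun z => ⟪δ, z - y⟫) ∘ (fun w => x + σ • w) =
      (fun t => ⟪δ, x - y⟫ + σ * t) ∘ (fun w => ⟪δ, w⟫) := by
    ext w
    simp only [Function.comp_apply, inner_add_right, inner_sub_right, real_inner_smul_right]
    ring
  rw [gaussPi_eq_map_stdGaussian, Measure.map_map (by fun_prop) (by fun_prop), h,
    ← Measure.map_map (by fun_prop) (by fun_prop), stdGaussian_map_inner,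
    gaussianReal_map_const_add_mul, mul_zero, add_zero]
  congr 1
  ext
  simp [mul_pow]

lemma gaussPi_setOf_inner_sub_le (m : ℕ) {σ : ℝ} (hσ : 0 < σ) (x y : EuclideanSpace ℝ (Fin m))
    {δ : EuclideanSpace ℝ (Fin m)} (hδ : δ ≠ 0) (c : ℝ) :
    gaussPi m σ x {z | ⟪δ, z - y⟫ ≤ c} =
      ENNReal.ofReal (Phi ((c - ⟪δ, x - y⟫) / (σ * ‖δ‖))) := by
  have hpre : {z | ⟪δ, z - y⟫ ≤ c} = (fun z => ⟪δ, z - y⟫) ⁻¹' Set.Iic c := rfl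
  rw [hpre, ← Measure.map_apply (by fun_prop) measurableSet_Iic, gaussPi_map_inner_sub,
    gaussianReal_Iic_eq_ofReal_Phi _ (mul_pos hσ (norm_pos_iff.mpr hδ))]

/-- The Gaussian measure of the half-space `{z : ⟨δ, z − x⟩ ≤ σ‖δ‖a}` under
`N(x, σ²I)` is `Φ(a)`, and under `N(x + δ, σ²I)` it is `Φ(a − ‖δ‖/σ)`. -/
theorem halfspace_gaussian_measure (m : ℕ) (σ : ℝ) (hσ : 0 < σ)
    (x δ : EuclideanSpace ℝ (Fin m)) (hδ : δ ≠ 0) (a : ℝ) :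
    gaussPi m σ x {z | ⟪δ, z - x⟫ ≤ σ * ‖δ‖ * a} = ENNReal.ofReal (Phi a) ∧
    gaussPi m σ (x + δ) {z | ⟪δ, z - x⟫ ≤ σ * ‖δ‖ * a} =
      ENNReal.ofReal (Phi (a - ‖δ‖ / σ)) := by
  have hσδ : σ * ‖δ‖ ≠ 0 := by positivity
  rw [gaussPi_setOf_inner_sub_le m hσ _ _ hδ, gaussPi_setOf_inner_sub_le m hσ _ _ hδ, sub_self,
    inner_zero_right, add_sub_cancel_left, real_inner_self_eq_norm_sq]
  constructor
  · rw [sub_zero, mul_div_cancel_left₀ _ hσδ]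
  · congr 2
    field_simp
end

section
/- (Monotonicity of the binomial upper tail in the success probability.) Fix n ∈ ℕ and k ∈ ℕ. For 0 ≤ p ≤ q ≤ 1, the binomial upper tails satisfy T(n, p, k) ≤ T(n, q, k), where T(n, p, k) = P(X ≥ k) for X distributed Binomial(n, p). -/
/-- The binomial upper tail `T(n, p, k) = P(X ≥ k)` for `X ~ Binomial(n, p)`,
i.e. `Σ_{j=k}^{n} C(n,j) p^j (1−p)^{n−j}`. -/
noncomputable def binomTail (n : ℕ) (p : ℝ) (k : ℕ) : ℝ :=
  ∑ j ∈ Finset.Icc k n, (n.choose j : ℝ) * p ^ j * (1 - p) ^ (n - j)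

/-!
Conditioning on the last of `n + 1` trials gives
`T(n+1, p, k+1) = p T(n, p, k) + (1 - p) T(n, p, k+1)`, a mixture whose weight `p` sits on the
larger tail `T(n, p, k) ≥ T(n, p, k+1)`. Raising `p` to `q` therefore can only increase the mixture,
and so does replacing both tails by the (inductively larger) tails at `q`.
-/

open Finset

noncomputable def binomProb (n : ℕ) (p : ℝ) (j : ℕ) : ℝ :=
  (n.choose j : ℝ) * p ^ j * (1 - p) ^ (n - j)

lemma binomTail_eq_sum_binomProb (n : ℕ) (p : ℝ) (k : ℕ) :
    binomTail n p k = ∑ j ∈ Icc k n, binomProb n p j := rfl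

lemma binomProb_nonneg {p : ℝ} (hp₀ : 0 ≤ p) (hp₁ : p ≤ 1) (n j : ℕ) : 0 ≤ binomProb n p j := by
  have : 0 ≤ 1 - p := sub_nonneg.2 hp₁
  unfold binomProb
  positivity

lemma binomProb_eq_zero_of_lt {n j : ℕ} (h : n < j) (p : ℝ) : binomProb n p j = 0 := by
  simp [binomProb, Nat.choose_eq_zero_of_lt h]

lemma binomProb_succ_succ (n : ℕ) (p : ℝ) (j : ℕ) :
    binomProb (n + 1) p (j + 1) = p * binomProb n p j + (1 - p) * binomProb n p (j + 1) := by
  rcases lt_or_ge j n with h | h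
  · obtain ⟨d, rfl⟩ : ∃ d, n = j + 1 + d := ⟨n - (j + 1), by omega⟩
    simp only [binomProb, Nat.choose_succ_succ', Nat.add_sub_add_right, Nat.cast_add,
      show j + 1 + d - j = d + 1 by omega, Nat.add_sub_cancel_left]
    ring
  · rw [binomProb_eq_zero_of_lt (Nat.lt_succ_of_le h)]
    simp only [binomProb, Nat.choose_succ_succ', Nat.choose_eq_zero_of_lt (Nat.lt_succ_of_le h),
      add_zero, Nat.add_sub_add_right]
    ring

lemma binomTail_zero_right (n : ℕ) (p : ℝ) : binomTail n p 0 = 1 := by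
  have h := add_pow p (1 - p) n
  rw [add_sub_cancel, one_pow] at h
  rw [h, Nat.range_succ_eq_Icc_zero, binomTail]
  exact sum_congr rfl fun j _ => by ring

lemma binomTail_eq_sum_Icc_of_le {n m : ℕ} (h : n ≤ m) (p : ℝ) (k : ℕ) :
    binomTail n p k = ∑ j ∈ Icc k m, binomProb n p j :=
  sum_subset (Icc_subset_Icc_right h) fun _ hj hjn =>
    binomProb_eq_zero_of_lt (by simp_all) p

lemma binomTail_succ_le (n : ℕ) {p : ℝ} (hp₀ : 0 ≤ p) (hp₁ : p ≤ 1) (k : ℕ) :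
    binomTail n p (k + 1) ≤ binomTail n p k :=
  sum_le_sum_of_subset_of_nonneg (Icc_subset_Icc_left k.le_succ) fun j _ _ =>
    binomProb_nonneg hp₀ hp₁ n j

lemma binomTail_succ_succ (n : ℕ) (p : ℝ) (k : ℕ) :
    binomTail (n + 1) p (k + 1) = p * binomTail n p k + (1 - p) * binomTail n p (k + 1) := by
  have shift (f : ℕ → ℝ) : ∑ j ∈ Icc (k + 1) (n + 1), f j = ∑ j ∈ Icc k n, f (j + 1) := by
    rw [← map_add_right_Icc k n 1, sum_map]
    rfl
  rw [binomTail_eq_sum_binomProb, shift, binomTail_eq_sum_Icc_of_le n.le_succ p (k + 1), shift,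
    binomTail_eq_sum_binomProb, mul_sum, mul_sum, ← sum_add_distrib]
  exact sum_congr rfl fun j _ => binomProb_succ_succ n p j

/-- Monotonicity of the binomial upper tail in the success probability:
for `0 ≤ p ≤ q ≤ 1`, `T(n, p, k) ≤ T(n, q, k)`. -/
theorem binomTail_mono (n k : ℕ) (p q : ℝ) (hp : 0 ≤ p) (hpq : p ≤ q) (hq : q ≤ 1) :
    binomTail n p k ≤ binomTail n q k := by
  induction n generalizing k with
  | zero => cases k <;> simp [binomTail]
  | succ n ih =>
    cases k with
    | zero => rw [binomTail_zero_right, binomTail_zero_right]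
    | succ k =>
      have h_anti := binomTail_succ_le n hp (hpq.trans hq) k
      rw [binomTail_succ_succ, binomTail_succ_succ]
      calc p * binomTail n p k + (1 - p) * binomTail n p (k + 1)
          ≤ q * binomTail n p k + (1 - q) * binomTail n p (k + 1) := by
            nlinarith [mul_nonneg (sub_nonneg.2 hpq) (sub_nonneg.2 h_anti)]
        _ ≤ q * binomTail n q k + (1 - q) * binomTail n q (k + 1) := by
            gcongr
            · exact hp.trans hpq
            · exact ih k
            · exact ih (k + 1)
end

section
/- (Holm's step-down procedure controls the family-wise error rate.) Let (Ω, 𝔽, P) be a probability space, let N ≥ 1, let PV_1, …, PV_N : Ω → [0,1] be measurable p-values, and let T ⊆ {1,…,N} be the set of true null hypotheses, satisfying superuniformity: for every i ∈ T and u ∈ [0,1], P(PV_i ≤ u) ≤ u. Let α ∈ [0,1] and say that hypothesis i is rejected (closed-testing characterization of Holm's procedure) iff for every nonempty subset S ⊆ {1,…,N} containing i, min_{j ∈ S} PV_j ≤ α/|S|. Then the probability that any true null hypothesis is rejected is at most α: P(∃ i ∈ T, i rejected) ≤ α. -/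
/-!
A true null `i` can only be rejected if, in particular, the intersection hypothesis `T` of all
true nulls is rejected by its Bonferroni test, i.e. some `PV j` with `j ∈ T` is at most
`α / |T|`. By the union bound and superuniformity this has probability at most
`|T| · α / |T| = α`; no dependence assumption is needed.
-/

open MeasureTheory

theorem measure_exists_le_div_card_le {ι Ω : Type*} [MeasurableSpace Ω] (μ : Measure Ω)
    (X : ι → Ω → ℝ) (T : Finset ι) (α : ℝ)
    (h : ∀ i ∈ T, μ {ω | X i ω ≤ α / T.card} ≤ ENNReal.ofReal (α / T.card)) :
    μ {ω | ∃ i ∈ T, X i ω ≤ α / T.card} ≤ ENNReal.ofReal α := by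
  rcases T.eq_empty_or_nonempty with rfl | hT
  · simp
  have hcard : (T.card : ℝ) ≠ 0 := by exact_mod_cast hT.card_pos.ne'
  have hunion : {ω | ∃ i ∈ T, X i ω ≤ α / T.card} = ⋃ i ∈ T, {ω | X i ω ≤ α / T.card} := by
    ext ω
    simp
  calc μ {ω | ∃ i ∈ T, X i ω ≤ α / T.card}
      ≤ ∑ i ∈ T, μ {ω | X i ω ≤ α / T.card} := hunion ▸ measure_biUnion_finset_le _ _
    _ ≤ ∑ _i ∈ T, ENNReal.ofReal (α / T.card) := Finset.sum_le_sum h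
    _ = ENNReal.ofReal α := by
      rw [Finset.sum_const, nsmul_eq_mul, ← ENNReal.ofReal_natCast,
        ← ENNReal.ofReal_mul (Nat.cast_nonneg _), mul_div_cancel₀ _ hcard]

/-- Holm's procedure is closed testing with Bonferroni local tests. -/
def ClosedTestingRejects {ι Ω : Type*} (PV : ι → Ω → ℝ) (α : ℝ) (i : ι) (ω : Ω) : Prop :=
  ∀ S : Finset ι, S.Nonempty → i ∈ S → ∃ j ∈ S, PV j ω ≤ α / S.card

theorem ClosedTestingRejects.exists_le_div_card {ι Ω : Type*} {PV : ι → Ω → ℝ} {α : ℝ}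
    {i : ι} {ω : Ω} {T : Finset ι} (hrej : ClosedTestingRejects PV α i ω) (hi : i ∈ T) :
    ∃ j ∈ T, PV j ω ≤ α / T.card :=
  hrej T ⟨i, hi⟩ hi

theorem holm_fwer_control_general {Ω : Type*} [MeasurableSpace Ω]
    (μ : Measure Ω)
    (N : ℕ) (PV : Fin N → Ω → ℝ)
    (T : Finset (Fin N))
    (hsuper : ∀ i ∈ T, ∀ u ∈ Set.Icc (0 : ℝ) 1,
      μ {ω | PV i ω ≤ u} ≤ ENNReal.ofReal u)
    (α : ℝ) (hα : α ∈ Set.Icc (0 : ℝ) 1) :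
    μ {ω | ∃ i ∈ T, ∀ S : Finset (Fin N), S.Nonempty → i ∈ S →
        ∃ j ∈ S, PV j ω ≤ α / S.card} ≤ ENNReal.ofReal α := by
  have hlevel : ∀ i ∈ T, α / T.card ∈ Set.Icc (0 : ℝ) 1 := fun i hi => by
    have hcard : (1 : ℝ) ≤ T.card := by exact_mod_cast Finset.card_pos.mpr ⟨i, hi⟩
    exact ⟨div_nonneg hα.1 (by positivity),
      (div_le_one (by positivity)).mpr (hα.2.trans hcard)⟩
  calc μ {ω | ∃ i ∈ T, ClosedTestingRejects PV α i ω}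
      ≤ μ {ω | ∃ j ∈ T, PV j ω ≤ α / T.card} :=
        measure_mono fun _ ⟨_, hi, hrej⟩ => hrej.exists_le_div_card hi
    _ ≤ ENNReal.ofReal α :=
        measure_exists_le_div_card_le μ PV T α fun i hi => hsuper i hi _ (hlevel i hi)

/-- Holm's step-down procedure controls the family-wise error rate. Using the
closed-testing characterization, hypothesis `i` is rejected iff every subset `S`
containing `i` satisfies `min_{j ∈ S} PV_j ≤ α/|S|`. If each p-value with index in the
set `T` of true nulls is superuniform, the probability that any true null is rejected
is at most `α`. -/
theorem holm_fwer_control {Ω : Type*} [MeasurableSpace Ω]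
    (μ : Measure Ω) [IsProbabilityMeasure μ]
    (N : ℕ) (hN : 1 ≤ N) (PV : Fin N → Ω → ℝ)
    (hmeas : ∀ i, Measurable (PV i))
    (hrange : ∀ i ω, PV i ω ∈ Set.Icc (0 : ℝ) 1)
    (T : Finset (Fin N))
    (hsuper : ∀ i ∈ T, ∀ u ∈ Set.Icc (0 : ℝ) 1,
      μ {ω | PV i ω ≤ u} ≤ ENNReal.ofReal u)
    (α : ℝ) (hα : α ∈ Set.Icc (0 : ℝ) 1) :
    μ {ω | ∃ i ∈ T, ∀ S : Finset (Fin N), S.Nonempty → i ∈ S →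
        ∃ j ∈ S, PV j ω ≤ α / S.card} ≤ ENNReal.ofReal α :=
  holm_fwer_control_general μ N PV T hsuper α hα
end

section
/- (Generalized Bonferroni procedure controls the k-FWER.) Let (Ω, 𝔽, P) be a probability space, let N ≥ 1, let PV_1, …, PV_N : Ω → [0,1] be measurable p-values, and let T ⊆ {1,…,N} be the set of true null hypotheses, satisfying superuniformity: for every i ∈ T and u ∈ [0,1], P(PV_i ≤ u) ≤ u. Let α ∈ [0,1], let k ≥ 1, and reject hypothesis i iff PV_i ≤ k·α/N. Then the probability of making at least k type I errors is at most α: P(|{i ∈ T : PV_i ≤ k·α/N}| ≥ k) ≤ α. -/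
/-!
Let `t = kα/N`. On the event of at least `k` type I errors, the number of true nulls with
`PV_i ≤ t` is at least `k`, so Markov's inequality applied to this count gives
`k · P(event) ≤ ∑_{i ∈ T} P(PV_i ≤ t) ≤ |T| · t ≤ N · t = kα`, by superuniformity.
No independence between the p-values is needed, since only linearity of expectation is used.
-/

open MeasureTheory ENNReal Finset

namespace MeasureTheory

variable {Ω : Type*} [MeasurableSpace Ω] {μ : Measure Ω}

lemma natCast_mul_measure_card_filter_ge_le_sum {ι : Type*} (s : Finset ι)
    (p : ι → Ω → Prop) [∀ i ω, Decidable (p i ω)]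
    (hp : ∀ i ∈ s, MeasurableSet {ω | p i ω}) (k : ℕ) :
    (k : ℝ≥0∞) * μ {ω | k ≤ #(s.filter (fun i => p i ω))} ≤
      ∑ i ∈ s, μ {ω | p i ω} := by
  set count : Ω → ℝ≥0∞ := fun ω => ∑ i ∈ s, {ω | p i ω}.indicator 1 ω
  have hcount : ∀ ω, count ω = #(s.filter (fun i => p i ω)) := by
    intro ω
    simp only [count, card_filter, Nat.cast_sum]
    refine sum_congr rfl fun i _ => ?_
    by_cases h : p i ω <;> simp [h]
  have hmeas : Measurable count :=
    Finset.measurable_sum _ fun i hi => measurable_one.indicator (hp i hi)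
  calc (k : ℝ≥0∞) * μ {ω | k ≤ #(s.filter (fun i => p i ω))}
      = k * μ {ω | (k : ℝ≥0∞) ≤ count ω} := by simp only [hcount, Nat.cast_le]
    _ ≤ ∫⁻ ω, count ω ∂μ := mul_meas_ge_le_lintegral₀ hmeas.aemeasurable _
    _ = ∑ i ∈ s, μ {ω | p i ω} := by
      rw [lintegral_finsetSum _ fun i hi => measurable_one.indicator (hp i hi)]
      exact sum_congr rfl fun i hi => lintegral_indicator_one (hp i hi)

def Superuniform (μ : Measure Ω) (X : Ω → ℝ) : Prop :=
  ∀ u ∈ Set.Icc (0 : ℝ) 1, μ {ω | X ω ≤ u} ≤ ENNReal.ofReal u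

lemma Superuniform.measure_le_le_ofReal [IsProbabilityMeasure μ] {X : Ω → ℝ}
    (hX : Superuniform μ X) {t : ℝ} (ht : 0 ≤ t) :
    μ {ω | X ω ≤ t} ≤ ENNReal.ofReal t := by
  rcases le_or_gt t 1 with ht1 | ht1
  · exact hX t ⟨ht, ht1⟩
  · calc μ {ω | X ω ≤ t} ≤ 1 := prob_le_one
      _ ≤ ENNReal.ofReal t := by simpa using ht1.le

end MeasureTheory

theorem generalized_bonferroni_kfwer_control_general {Ω : Type*} [MeasurableSpace Ω]
    (μ : Measure Ω) [IsProbabilityMeasure μ]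
    (N : ℕ) (hN : 1 ≤ N) (PV : Fin N → Ω → ℝ)
    (hmeas : ∀ i, Measurable (PV i))
    (T : Finset (Fin N))
    (hsuper : ∀ i ∈ T, ∀ u ∈ Set.Icc (0 : ℝ) 1,
      μ {ω | PV i ω ≤ u} ≤ ENNReal.ofReal u)
    (α : ℝ) (hα : α ∈ Set.Icc (0 : ℝ) 1) (k : ℕ) (hk : 1 ≤ k) :
    μ {ω | k ≤ (T.filter (fun i => PV i ω ≤ k * α / N)).card} ≤ ENNReal.ofReal α := by
  set t : ℝ := k * α / N
  have hN0 : (0 : ℝ) < N := by exact_mod_cast hN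
  have ht : 0 ≤ t := by have := hα.1; positivity
  have hkα : (k : ℝ≥0∞) * μ {ω | k ≤ #(T.filter (fun i => PV i ω ≤ t))} ≤
      k * ENNReal.ofReal α :=
    calc _ ≤ ∑ i ∈ T, μ {ω | PV i ω ≤ t} :=
          natCast_mul_measure_card_filter_ge_le_sum T _
            (fun i _ => measurableSet_le (hmeas i) measurable_const) k
      _ ≤ ∑ _i ∈ T, ENNReal.ofReal t :=
          sum_le_sum fun i hi => Superuniform.measure_le_le_ofReal (hsuper i hi) ht
      _ = #T * ENNReal.ofReal t := by rw [sum_const, nsmul_eq_mul]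
      _ ≤ N * ENNReal.ofReal t := by
          gcongr
          simpa using card_le_univ T
      _ = k * ENNReal.ofReal α := by
          rw [← ofReal_natCast, ← ofReal_natCast k, ← ofReal_mul hN0.le,
            ← ofReal_mul (Nat.cast_nonneg k)]
          congr 1
          exact mul_div_cancel₀ _ hN0.ne'
  exact (ENNReal.mul_le_mul_iff_right (by exact_mod_cast (by omega : k ≠ 0))
    (natCast_ne_top k)).mp hkα

/-- The generalized Bonferroni procedure controls the `k`-FWER: rejecting hypothesis `i`
iff `PV_i ≤ k·α/N`, the probability of making at least `k` type I errors (rejections of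
true nulls `i ∈ T`) is at most `α`, provided each true-null p-value is superuniform. -/
theorem generalized_bonferroni_kfwer_control {Ω : Type*} [MeasurableSpace Ω]
    (μ : Measure Ω) [IsProbabilityMeasure μ]
    (N : ℕ) (hN : 1 ≤ N) (PV : Fin N → Ω → ℝ)
    (hmeas : ∀ i, Measurable (PV i))
    (hrange : ∀ i ω, PV i ω ∈ Set.Icc (0 : ℝ) 1)
    (T : Finset (Fin N))
    (hsuper : ∀ i ∈ T, ∀ u ∈ Set.Icc (0 : ℝ) 1,
      μ {ω | PV i ω ≤ u} ≤ ENNReal.ofReal u)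
    (α : ℝ) (hα : α ∈ Set.Icc (0 : ℝ) 1) (k : ℕ) (hk : 1 ≤ k) :
    μ {ω | k ≤ (T.filter (fun i => PV i ω ≤ k * α / N)).card} ≤ ENNReal.ofReal α :=
  generalized_bonferroni_kfwer_control_general μ N hN PV hmeas T hsuper α hα k hk
end
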